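/- arXiv:1112.2153 — 6 statements merged into one kernel-verified Lean document; each statement's English description precedes it below -/
import Mathlib

section
/- Let t > 0 and r ∈ ℝ with r² < 4t. Let g = !![-1, 0; 0, t] be the 2×2 real matrix of the (t,r)-part of the FRW metric, and let Jinv = !![1, r/2; r/(2√t), √t]. Then det Jinv = (4t − r²)/(4√t) ≠ 0, and the matrix J = Jinv⁻¹ satisfies Jᵀ * g * J = !![-1/(1 − r²/(4t)), 0; 0, 1/(1 − r²/(4t))]. -/
open Matrix

/-- The computational core of the transformation of the flat FRW metric
(scale factor `R(t) = √t`) into standard Schwarzschild coordinates: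
with `g` the `(t,r)`-part of the FRW metric and `Jinv` the Jacobian of the
inverse coordinate transformation, `J = Jinv⁻¹` satisfies `Jᵀ g J = diag(-1/(1-r²/4t), 1/(1-r²/4t))`. -/
theorem frw1_metric_transform (t r : ℝ) (ht : 0 < t) (hr : r ^ 2 < 4 * t)
    (g : Matrix (Fin 2) (Fin 2) ℝ) (hg : g = !![-1, 0; 0, t])
    (Jinv : Matrix (Fin 2) (Fin 2) ℝ)
    (hJinv : Jinv = !![1, r / 2; r / (2 * Real.sqrt t), Real.sqrt t]) :
    Jinv.det = (4 * t - r ^ 2) / (4 * Real.sqrt t) ∧ Jinv.det ≠ 0 ∧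
    (Jinv⁻¹)ᵀ * g * Jinv⁻¹ =
      !![-1 / (1 - r ^ 2 / (4 * t)), 0; 0, 1 / (1 - r ^ 2 / (4 * t))] := by
  set s := Real.sqrt t with hs
  have hs0 : 0 < s := Real.sqrt_pos.mpr ht
  have hs2 : s ^ 2 = t := Real.sq_sqrt ht.le
  have hdet : Jinv.det = (4 * t - r ^ 2) / (4 * s) := by
    subst hJinv
    rw [Matrix.det_fin_two_of]
    field_simp
    nlinarith [hs2]
  have hne : Jinv.det ≠ 0 := by
    rw [hdet]
    exact (div_pos (by nlinarith) (by positivity)).ne'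
  refine ⟨hdet, hne, ?_⟩
  have hd4 : (4 : ℝ) * t - r ^ 2 ≠ 0 := by nlinarith
  have hMinv : Jinv⁻¹ = ((4 * t - r ^ 2) / (4 * s))⁻¹ •
      !![s, -(r / 2); -(r / (2 * s)), 1] := by
    rw [Matrix.inv_def, hdet, hJinv, Matrix.adjugate_fin_two_of, Ring.inverse_eq_inv']
  rw [hMinv, hg]
  ext i j
  fin_cases i <;> fin_cases j <;>
    simp [Matrix.mul_apply, Fin.sum_univ_succ] <;>
    field_simp <;> rw [← hs2] <;> ring
end

section
/- Let Ψ₀ ∈ ℝ. Both the constant function Ψ₁(t, r̄) = Ψ₀ and the function Ψ₂(t, r̄) = Ψ₀·√(t/(4t² + r̄²)) satisfy, at every point with t > 0, the partial differential equation ∂/∂r̄ [Ψ(t, r̄)·(1 − r̄²/(4t²))] = ∂/∂t [Ψ(t, r̄)·(r̄/(2t))]. -/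
/-!
Write `C = 1 - r²/(4t²)` and `E = r/(2t)`. Since `∂_r C = ∂_t E = -r/(2t²)`, the product rule reduces
`∂_r(ΨC) = ∂_t(ΨE)` to the transport equation `C ∂_r Ψ = E ∂_t Ψ`, which a constant solves
trivially. For `Ψ = √(t/s)` with `s = 4t² + r²` the logarithmic derivatives are
`∂_r Ψ / Ψ = -r/s` and `∂_t Ψ / Ψ = (r² - 4t²)/(2ts)`, so both sides equal
`-Ψ r (4t² - r²)/(4t² s)`.
-/

open Real

theorem HasDerivAt.sqrt_of_pos {f : ℝ → ℝ} {f' x : ℝ} (hf : HasDerivAt f f' x)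
    (hx : 0 < f x) :
    HasDerivAt (fun y => √(f y)) (f' / (2 * f x) * √(f x)) x := by
  refine (hf.sqrt hx.ne').congr_deriv ?_
  have hsqrt : 0 < √(f x) := sqrt_pos.mpr hx
  field_simp
  rw [sq_sqrt hx.le]

theorem deriv_mul_eq_deriv_mul_of_transport {Ψr Ψt C E : ℝ → ℝ} {ψr ψt c e x y : ℝ}
    (hΨr : HasDerivAt Ψr ψr x) (hΨt : HasDerivAt Ψt ψt y)
    (hC : HasDerivAt C c x) (hE : HasDerivAt E e y)
    (hΨ : Ψr x = Ψt y) (hCE : c = e) (htransport : ψr * C x = ψt * E y) :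
    deriv (fun x => Ψr x * C x) x = deriv (fun y => Ψt y * E y) y := by
  have hl : HasDerivAt (fun x => Ψr x * C x) (ψr * C x + Ψr x * c) x := hΨr.mul hC
  have hr : HasDerivAt (fun y => Ψt y * E y) (ψt * E y + Ψt y * e) y := hΨt.mul hE
  rw [hl.deriv, hr.deriv, hΨ, hCE, htransport]

theorem hasDerivAt_one_sub_sq_div (t r : ℝ) :
    HasDerivAt (fun r' => 1 - r' ^ 2 / (4 * t ^ 2)) (-(r / (2 * t ^ 2))) r := by
  refine (((hasDerivAt_pow 2 r).div_const (4 * t ^ 2)).const_sub 1).congr_deriv ?_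
  ring

theorem hasDerivAt_div_two_mul (r : ℝ) {t : ℝ} (ht : t ≠ 0) :
    HasDerivAt (fun t' => r / (2 * t')) (-(r / (2 * t ^ 2))) t := by
  refine ((hasDerivAt_const t r).div ((hasDerivAt_id' t).const_mul 2)
    (by positivity)).congr_deriv ?_
  field_simp
  ring

theorem hasDerivAt_sqrt_div_in_r {t : ℝ} (ht : 0 < t) (r : ℝ) :
    HasDerivAt (fun r' => √(t / (4 * t ^ 2 + r' ^ 2)))
      (-(r / (4 * t ^ 2 + r ^ 2)) * √(t / (4 * t ^ 2 + r ^ 2))) r := by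
  have hs : 0 < 4 * t ^ 2 + r ^ 2 := by positivity
  have hquot : HasDerivAt (fun r' => t / (4 * t ^ 2 + r' ^ 2))
      (-(t * (2 * r)) / (4 * t ^ 2 + r ^ 2) ^ 2) r := by
    refine ((hasDerivAt_const r t).div ((hasDerivAt_pow 2 r).const_add (4 * t ^ 2))
      hs.ne').congr_deriv ?_
    ring
  refine (hquot.sqrt_of_pos (by positivity)).congr_deriv ?_
  field_simp

theorem hasDerivAt_sqrt_div_in_t {t : ℝ} (ht : 0 < t) (r : ℝ) :
    HasDerivAt (fun t' => √(t' / (4 * t' ^ 2 + r ^ 2)))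
      ((r ^ 2 - 4 * t ^ 2) / (2 * t * (4 * t ^ 2 + r ^ 2)) * √(t / (4 * t ^ 2 + r ^ 2))) t := by
  have hs : 0 < 4 * t ^ 2 + r ^ 2 := by positivity
  have hquot : HasDerivAt (fun t' => t' / (4 * t' ^ 2 + r ^ 2))
      ((r ^ 2 - 4 * t ^ 2) / (4 * t ^ 2 + r ^ 2) ^ 2) t := by
    refine ((hasDerivAt_id' t).div (((hasDerivAt_pow 2 t).const_mul 4).add_const (r ^ 2))
      hs.ne').congr_deriv ?_
    ring
  refine (hquot.sqrt_of_pos (by positivity)).congr_deriv ?_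
  field_simp

/-- Both the constant integrating factor `Ψ₁(t,r̄) = Ψ₀` and the dynamical one
`Ψ₂(t,r̄) = Ψ₀√(t/(4t² + r̄²))` solve the integrating factor PDE
`∂_r̄ [Ψ(1 − r̄²/(4t²))] = ∂_t [Ψ·(r̄/(2t))]` at every point with `t > 0`. -/
theorem integrating_factor_solutions (Ψ₀ : ℝ) :
    (∀ t r : ℝ, 0 < t →
      deriv (fun r' : ℝ => Ψ₀ * (1 - r' ^ 2 / (4 * t ^ 2))) r =
        deriv (fun t' : ℝ => Ψ₀ * (r / (2 * t'))) t) ∧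
    (∀ t r : ℝ, 0 < t →
      deriv (fun r' : ℝ =>
          (Ψ₀ * Real.sqrt (t / (4 * t ^ 2 + r' ^ 2))) * (1 - r' ^ 2 / (4 * t ^ 2))) r =
        deriv (fun t' : ℝ =>
          (Ψ₀ * Real.sqrt (t' / (4 * t' ^ 2 + r ^ 2))) * (r / (2 * t'))) t) := by
  refine ⟨fun t r ht => ?_, fun t r ht => ?_⟩
  · exact deriv_mul_eq_deriv_mul_of_transport (hasDerivAt_const r Ψ₀) (hasDerivAt_const t Ψ₀)
      (hasDerivAt_one_sub_sq_div t r) (hasDerivAt_div_two_mul r ht.ne') rfl rfl (by ring)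
  · refine deriv_mul_eq_deriv_mul_of_transport ((hasDerivAt_sqrt_div_in_r ht r).const_mul Ψ₀)
      ((hasDerivAt_sqrt_div_in_t ht r).const_mul Ψ₀) (hasDerivAt_one_sub_sq_div t r)
      (hasDerivAt_div_two_mul r ht.ne') rfl rfl ?_
    field_simp
    ring
end

section
/- Let Ψ₀ > 0, t > 0, and 0 ≤ r̄ ≤ 2t. If t̄ = (Ψ₀/2)·√((4t² + r̄²)/t), then (t̄² + √(t̄⁴ − r̄²·Ψ₀⁴))/(2Ψ₀²) = t. -/
/-- Recovering the FRW time `t` from the FRW-2 standard Schwarzschild coordinates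
`(t̄, r̄)`: if `t̄ = (Ψ₀/2)√((4t² + r̄²)/t)` with `Ψ₀ > 0`, `t > 0` and `0 ≤ r̄ ≤ 2t`,
then `t = (t̄² + √(t̄⁴ − r̄²Ψ₀⁴))/(2Ψ₀²)`. -/
theorem frw2_time_inverse (Ψ₀ t rbar : ℝ) (hΨ : 0 < Ψ₀) (ht : 0 < t)
    (hr0 : 0 ≤ rbar) (hr2 : rbar ≤ 2 * t)
    (tbar : ℝ) (htbar : tbar = (Ψ₀ / 2) * Real.sqrt ((4 * t ^ 2 + rbar ^ 2) / t)) :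
    (tbar ^ 2 + Real.sqrt (tbar ^ 4 - rbar ^ 2 * Ψ₀ ^ 4)) / (2 * Ψ₀ ^ 2) = t := by
  have harg : (0:ℝ) ≤ (4 * t ^ 2 + rbar ^ 2) / t := by positivity
  have hsq : tbar ^ 2 = (Ψ₀ / 2) ^ 2 * ((4 * t ^ 2 + rbar ^ 2) / t) := by
    rw [htbar, mul_pow, Real.sq_sqrt harg]
  have h4 : tbar ^ 4 - rbar ^ 2 * Ψ₀ ^ 4
      = (Ψ₀ ^ 2 * (4 * t ^ 2 - rbar ^ 2) / (4 * t)) ^ 2 := by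
    have : tbar ^ 4 = (tbar ^ 2) ^ 2 := by ring
    rw [this, hsq]
    field_simp
    ring
  have hnn : (0:ℝ) ≤ Ψ₀ ^ 2 * (4 * t ^ 2 - rbar ^ 2) / (4 * t) := by
    have : rbar ^ 2 ≤ (2 * t) ^ 2 := by nlinarith
    have h1 : (0:ℝ) ≤ 4 * t ^ 2 - rbar ^ 2 := by nlinarith
    positivity
  rw [h4, Real.sqrt_sq hnn, hsq]
  field_simp
  ring
end

section
/- Let c > 0 and 0 < σ < c². The map Φ(ρ, v) = (u⁰(ρ,v), u¹(ρ,v)), where u⁰(ρ,v) = ρ·[((σ + c²)/c²)·v²/(c² − v²) + 1] and u¹(ρ,v) = ρ·(σ + c²)·v/(c² − v²), is injective on the region {(ρ, v) : ρ > 0 and |v| < c}; moreover Φ is differentiable on this region and the determinant of its derivative is continuous and non-zero at every point of the region. -/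
/-!
Φ(ρ, v) = ρ · (f v, g v) with f = u⁰/ρ and g = u¹/ρ. Equal images force equal ratios
g/f = c²(σ + c²) v / (c⁴ + σ v²), and (x - y)(c⁴ - σ x y) = 0 with c⁴ > σ x y on |v| < c
gives equal velocities, hence equal densities. For a map of the form ρ · (f v, g v) the
Jacobian is ρ (f g' - g f'), which here simplifies to
ρ (σ + c²)(c⁴ - σ v²) / (c² (c² - v²)²) > 0.
-/

open Set ContinuousLinearMap

section Scaling

variable {𝕜 : Type*}

theorem injOn_mul_prod_mul [Field 𝕜] {f g : 𝕜 → 𝕜} {s : Set 𝕜} (hf : ∀ v ∈ s, f v ≠ 0)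
    (hgf : InjOn (fun v => g v / f v) s) :
    InjOn (fun p : 𝕜 × 𝕜 => (p.1 * f p.2, p.1 * g p.2)) {p | p.1 ≠ 0 ∧ p.2 ∈ s} := by
  rintro ⟨a, x⟩ ⟨ha, hx⟩ ⟨b, y⟩ ⟨hb, hy⟩ h
  obtain ⟨hfab, hgab⟩ := Prod.mk.inj h
  have hxy : x = y := hgf hx hy <| calc
    g x / f x = a * g x / (a * f x) := (mul_div_mul_left _ _ ha).symm
    _ = b * g y / (b * f y) := by rw [hfab, hgab]
    _ = g y / f y := mul_div_mul_left _ _ hb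
  subst hxy
  exact Prod.ext (mul_right_cancel₀ (hf x hx) hfab) rfl

theorem injOn_mul_div_add_mul_sq [Field 𝕜] [LinearOrder 𝕜] [IsStrictOrderedRing 𝕜]
    {k a b : 𝕜} (hk : k ≠ 0) (hb : 0 ≤ b) :
    InjOn (fun v => k * v / (a + b * v ^ 2)) {v | b * v ^ 2 < a} := by
  intro x (hx : b * x ^ 2 < a) y (hy : b * y ^ 2 < a) h
  have hx0 : 0 < a + b * x ^ 2 := by nlinarith [mul_nonneg hb (sq_nonneg x)]
  have hy0 : 0 < a + b * y ^ 2 := by nlinarith [mul_nonneg hb (sq_nonneg y)]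
  have hcross : k * x * (a + b * y ^ 2) = k * y * (a + b * x ^ 2) :=
    (div_eq_div_iff hx0.ne' hy0.ne').mp h
  have hxy : b * x * y < a := by nlinarith [mul_nonneg hb (sq_nonneg (x - y))]
  have hfactor : k * ((x - y) * (a - b * x * y)) = 0 := by linear_combination hcross
  rcases mul_eq_zero.mp ((mul_eq_zero.mp hfactor).resolve_left hk) with heq | hzero
  · exact sub_eq_zero.mp heq
  · exact absurd hzero (sub_pos.mpr hxy).ne'

theorem det_smul_fst_add_smul_snd_prod [NontriviallyNormedField 𝕜] (a b c d : 𝕜) :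
    LinearMap.det (((a • fst 𝕜 𝕜 𝕜 + b • snd 𝕜 𝕜 𝕜).prod
      (c • fst 𝕜 𝕜 𝕜 + d • snd 𝕜 𝕜 𝕜) : 𝕜 × 𝕜 →L[𝕜] 𝕜 × 𝕜) : 𝕜 × 𝕜 →ₗ[𝕜] 𝕜 × 𝕜) =
      a * d - b * c := by
  rw [← LinearMap.det_toMatrix (Module.Basis.finTwoProd 𝕜), Matrix.det_fin_two]
  simp [LinearMap.toMatrix_apply]

theorem hasFDerivAt_mul_prod_mul [NontriviallyNormedField 𝕜] {f g : 𝕜 → 𝕜} {f' g' ρ v : 𝕜}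
    (hf : HasDerivAt f f' v) (hg : HasDerivAt g g' v) :
    HasFDerivAt (fun p : 𝕜 × 𝕜 => (p.1 * f p.2, p.1 * g p.2))
      ((f v • fst 𝕜 𝕜 𝕜 + (ρ * f') • snd 𝕜 𝕜 𝕜).prod
        (g v • fst 𝕜 𝕜 𝕜 + (ρ * g') • snd 𝕜 𝕜 𝕜)) (ρ, v) := by
  have hf2 := hf.comp_hasFDerivAt (ρ, v) (hasFDerivAt_snd (𝕜 := 𝕜) (p := (ρ, v)))
  have hg2 := hg.comp_hasFDerivAt (ρ, v) (hasFDerivAt_snd (𝕜 := 𝕜) (p := (ρ, v)))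
  convert (hasFDerivAt_fst.mul hf2).prodMk (hasFDerivAt_fst.mul hg2) using 2 <;>
    ext <;> simp [mul_comm]

theorem det_fderiv_mul_prod_mul [NontriviallyNormedField 𝕜] {f g : 𝕜 → 𝕜} {f' g' ρ v : 𝕜}
    (hf : HasDerivAt f f' v) (hg : HasDerivAt g g' v) :
    LinearMap.det (fderiv 𝕜 (fun p : 𝕜 × 𝕜 => (p.1 * f p.2, p.1 * g p.2)) (ρ, v)).toLinearMap =
      ρ * (f v * g' - g v * f') := by
  rw [(hasFDerivAt_mul_prod_mul hf hg).fderiv, det_smul_fst_add_smul_snd_prod]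
  ring

end Scaling

section Fluid

variable {c σ v : ℝ}

noncomputable def fluidEnergy (c σ v : ℝ) : ℝ := ((σ + c ^ 2) / c ^ 2) * v ^ 2 / (c ^ 2 - v ^ 2) + 1

noncomputable def fluidMomentum (c σ v : ℝ) : ℝ := (σ + c ^ 2) * v / (c ^ 2 - v ^ 2)

theorem sub_sq_pos_of_abs_lt (hv : |v| < c) : 0 < c ^ 2 - v ^ 2 :=
  sub_pos.mpr (sq_lt_sq' (abs_lt.mp hv).1 (abs_lt.mp hv).2)

theorem mul_sq_lt_pow_four (hv : |v| < c) (hσ : 0 ≤ σ) (hσc : σ < c ^ 2) : σ * v ^ 2 < c ^ 4 := by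
  have hv2 := sub_sq_pos_of_abs_lt hv
  nlinarith [mul_le_mul_of_nonneg_left hv2.le hσ]

theorem fluidEnergy_eq (hv : |v| < c) :
    fluidEnergy c σ v = (c ^ 4 + σ * v ^ 2) / (c ^ 2 * (c ^ 2 - v ^ 2)) := by
  have hc : c ≠ 0 := ((abs_nonneg v).trans_lt hv).ne'
  have hD := (sub_sq_pos_of_abs_lt hv).ne'
  unfold fluidEnergy
  field_simp
  ring

theorem fluidEnergy_pos (hv : |v| < c) (hσ : 0 ≤ σ) : 0 < fluidEnergy c σ v := by
  have hc : 0 < c := (abs_nonneg v).trans_lt hv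
  rw [fluidEnergy_eq hv]
  exact div_pos (by positivity) (mul_pos (by positivity) (sub_sq_pos_of_abs_lt hv))

theorem fluidMomentum_div_fluidEnergy (hv : |v| < c) (hσ : 0 ≤ σ) :
    fluidMomentum c σ v / fluidEnergy c σ v = c ^ 2 * (σ + c ^ 2) * v / (c ^ 4 + σ * v ^ 2) := by
  have hc : c ≠ 0 := ((abs_nonneg v).trans_lt hv).ne'
  have hD := (sub_sq_pos_of_abs_lt hv).ne'
  have hN : c ^ 4 + σ * v ^ 2 ≠ 0 := by positivity
  rw [fluidEnergy_eq hv, fluidMomentum]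
  field_simp

theorem injOn_fluid (hσ : 0 ≤ σ) (hσc : σ < c ^ 2) :
    InjOn (fun p : ℝ × ℝ => (p.1 * fluidEnergy c σ p.2, p.1 * fluidMomentum c σ p.2))
      {p | p.1 ≠ 0 ∧ |p.2| < c} := by
  refine injOn_mul_prod_mul (s := {v | |v| < c}) (fun v hv => (fluidEnergy_pos hv hσ).ne') ?_
  have hk : c ^ 2 * (σ + c ^ 2) ≠ 0 := by
    have : 0 < c ^ 2 := hσ.trans_lt hσc
    positivity
  exact ((injOn_mul_div_add_mul_sq hk hσ).mono fun v hv => mul_sq_lt_pow_four hv hσ hσc).congr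
    fun v hv => (fluidMomentum_div_fluidEnergy hv hσ).symm

theorem hasDerivAt_fluidEnergy (hv : |v| < c) :
    HasDerivAt (fluidEnergy c σ) (2 * (σ + c ^ 2) * v / (c ^ 2 - v ^ 2) ^ 2) v := by
  have hc : c ≠ 0 := ((abs_nonneg v).trans_lt hv).ne'
  have hD := (sub_sq_pos_of_abs_lt hv).ne'
  refine ((((hasDerivAt_pow 2 v).const_mul ((σ + c ^ 2) / c ^ 2)).div
    ((hasDerivAt_const v (c ^ 2)).sub (hasDerivAt_pow 2 v)) hD).add_const 1).congr_deriv ?_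
  simp only [Pi.sub_apply]
  field_simp
  ring

theorem hasDerivAt_fluidMomentum (hv : |v| < c) :
    HasDerivAt (fluidMomentum c σ) ((σ + c ^ 2) * (c ^ 2 + v ^ 2) / (c ^ 2 - v ^ 2) ^ 2) v := by
  have hD := (sub_sq_pos_of_abs_lt hv).ne'
  refine (((hasDerivAt_id v).const_mul (σ + c ^ 2)).div
    ((hasDerivAt_const v (c ^ 2)).sub (hasDerivAt_pow 2 v)) hD).congr_deriv ?_
  simp only [Pi.sub_apply, id]
  field_simp
  ring

theorem det_fderiv_fluid (ρ : ℝ) (hv : |v| < c) :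
    LinearMap.det (fderiv ℝ (fun p : ℝ × ℝ => (p.1 * fluidEnergy c σ p.2,
        p.1 * fluidMomentum c σ p.2)) (ρ, v)).toLinearMap =
      ρ * (σ + c ^ 2) * (c ^ 4 - σ * v ^ 2) / (c ^ 2 * (c ^ 2 - v ^ 2) ^ 2) := by
  have hc : c ≠ 0 := ((abs_nonneg v).trans_lt hv).ne'
  have hD := (sub_sq_pos_of_abs_lt hv).ne'
  rw [det_fderiv_mul_prod_mul (hasDerivAt_fluidEnergy hv) (hasDerivAt_fluidMomentum hv),
    fluidEnergy_eq hv, fluidMomentum]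
  field_simp
  ring

theorem continuousOn_det_fderiv_fluid :
    ContinuousOn (fun p : ℝ × ℝ => LinearMap.det (fderiv ℝ (fun q : ℝ × ℝ =>
      (q.1 * fluidEnergy c σ q.2, q.1 * fluidMomentum c σ q.2)) p).toLinearMap)
      {p | |p.2| < c} := by
  refine ContinuousOn.congr ?_ fun p hp => det_fderiv_fluid p.1 hp
  refine .div (by fun_prop) (by fun_prop) fun p (hp : |p.2| < c) => ?_
  have hc : c ≠ 0 := ((abs_nonneg p.2).trans_lt hp).ne'
  have hD := (sub_sq_pos_of_abs_lt hp).ne'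
  positivity

theorem det_fderiv_fluid_pos {ρ : ℝ} (hρ : 0 < ρ) (hv : |v| < c) (hσ : 0 ≤ σ) (hσc : σ < c ^ 2) :
    0 < LinearMap.det (fderiv ℝ (fun p : ℝ × ℝ => (p.1 * fluidEnergy c σ p.2,
        p.1 * fluidMomentum c σ p.2)) (ρ, v)).toLinearMap := by
  have hc : 0 < c := (abs_nonneg v).trans_lt hv
  have hN : 0 < c ^ 4 - σ * v ^ 2 := sub_pos.mpr (mul_sq_lt_pow_four hv hσ hσc)
  have hD := (sub_sq_pos_of_abs_lt hv).ne'
  rw [det_fderiv_fluid ρ hv]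
  positivity

end Fluid

theorem fluid_to_conserved_injective_general (c σ : ℝ) (hσ : 0 < σ)
    (hσc : σ < c ^ 2)
    (Φ : ℝ × ℝ → ℝ × ℝ)
    (hΦ : Φ = fun p =>
      (p.1 * (((σ + c ^ 2) / c ^ 2) * p.2 ^ 2 / (c ^ 2 - p.2 ^ 2) + 1),
       p.1 * (σ + c ^ 2) * p.2 / (c ^ 2 - p.2 ^ 2)))
    (S : Set (ℝ × ℝ)) (hS : S = {p : ℝ × ℝ | 0 < p.1 ∧ |p.2| < c}) :
    Set.InjOn Φ S ∧
    (∀ p ∈ S, DifferentiableAt ℝ Φ p) ∧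
    ContinuousOn
      (fun p => LinearMap.det ((fderiv ℝ Φ p).toLinearMap)) S ∧
    ∀ p ∈ S, LinearMap.det ((fderiv ℝ Φ p).toLinearMap) ≠ 0 := by
  have hΦ_eq : Φ = fun p => (p.1 * fluidEnergy c σ p.2, p.1 * fluidMomentum c σ p.2) := by
    simp only [hΦ, fluidEnergy, fluidMomentum, mul_div_assoc, mul_assoc]
  subst hΦ_eq hS
  refine ⟨(injOn_fluid hσ.le hσc).mono fun _ => And.imp_left LT.lt.ne', ?_, ?_, ?_⟩
  · rintro ⟨ρ, v⟩ ⟨-, hv⟩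
    exact (hasFDerivAt_mul_prod_mul (hasDerivAt_fluidEnergy hv)
      (hasDerivAt_fluidMomentum hv)).differentiableAt
  · exact continuousOn_det_fderiv_fluid.mono fun p hp => hp.2
  · rintro ⟨ρ, v⟩ ⟨hρ, hv⟩
    exact (det_fderiv_fluid_pos hρ hv hσ.le hσc).ne'

/-- The map from the fluid variables `(ρ, v)` to the conserved quantities
`(u⁰, u¹) = (T⁰⁰_M, T⁰¹_M)` of a perfect fluid with equation of state `p = σρ`,
`0 < √σ < c`, is injective on `{ρ > 0, |v| < c}`, differentiable there, and the
determinant of its derivative is continuous and non-zero on that region. -/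
theorem fluid_to_conserved_injective (c σ : ℝ) (hc : 0 < c) (hσ : 0 < σ)
    (hσc : σ < c ^ 2)
    (Φ : ℝ × ℝ → ℝ × ℝ)
    (hΦ : Φ = fun p =>
      (p.1 * (((σ + c ^ 2) / c ^ 2) * p.2 ^ 2 / (c ^ 2 - p.2 ^ 2) + 1),
       p.1 * (σ + c ^ 2) * p.2 / (c ^ 2 - p.2 ^ 2)))
    (S : Set (ℝ × ℝ)) (hS : S = {p : ℝ × ℝ | 0 < p.1 ∧ |p.2| < c}) :
    Set.InjOn Φ S ∧
    (∀ p ∈ S, DifferentiableAt ℝ Φ p) ∧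
    ContinuousOn
      (fun p => LinearMap.det ((fderiv ℝ Φ p).toLinearMap)) S ∧
    ∀ p ∈ S, LinearMap.det ((fderiv ℝ Φ p).toLinearMap) ≠ 0 :=
  fluid_to_conserved_injective_general c σ hσ hσc Φ hΦ S hS
end

section
/- Let c > 0 and 0 < σ < c². Let ρ > 0 and v with 0 < |v| < c, and set u⁰ = u⁰(ρ,v) and u¹ = u¹(ρ,v). Then v = (c²/(2σu¹))·[(σ + c²)·u⁰ − √((σ + c²)²·(u⁰)² − 4σ·(u¹)²)] and ρ = (c² − v²)·u¹/((σ + c²)·v). -/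
/-- The explicit inverse of the mapping `(ρ, v) ↦ (u⁰, u¹)` from fluid variables to
conserved quantities of a perfect fluid with equation of state `p = σρ`, `0 < √σ < c`:
taking the minus sign in the quadratic formula recovers `v` (with `|v| < c`), and then `ρ`. -/
theorem conserved_to_fluid_inverse (c σ ρ v : ℝ) (hc : 0 < c) (hσ : 0 < σ)
    (hσc : σ < c ^ 2) (hρ : 0 < ρ) (hv0 : 0 < |v|) (hv : |v| < c)
    (u0 u1 : ℝ)
    (hu0 : u0 = ρ * (((σ + c ^ 2) / c ^ 2) * v ^ 2 / (c ^ 2 - v ^ 2) + 1))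
    (hu1 : u1 = ρ * (σ + c ^ 2) * v / (c ^ 2 - v ^ 2)) :
    v = (c ^ 2 / (2 * σ * u1)) *
        ((σ + c ^ 2) * u0 - Real.sqrt ((σ + c ^ 2) ^ 2 * u0 ^ 2 - 4 * σ * u1 ^ 2)) ∧
    ρ = (c ^ 2 - v ^ 2) * u1 / ((σ + c ^ 2) * v) := by
  have hvne : v ≠ 0 := abs_pos.mp hv0
  have hv2 : v ^ 2 < c ^ 2 := by nlinarith [sq_abs v, abs_nonneg v]
  have hD : 0 < c ^ 2 - v ^ 2 := by linarith
  have hcne : (c : ℝ) ^ 2 ≠ 0 := by positivity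
  have ha : 0 < σ + c ^ 2 := by positivity
  have hσv : 0 < c ^ 2 - σ * v ^ 2 / c ^ 2 := by
    have hvv : 0 ≤ v ^ 2 := sq_nonneg v
    rw [sub_pos, div_lt_iff₀ (by positivity)]
    nlinarith
  have key : (σ + c ^ 2) ^ 2 * u0 ^ 2 - 4 * σ * u1 ^ 2 =
      ((ρ * (σ + c ^ 2) / (c ^ 2 - v ^ 2)) * (c ^ 2 - σ * v ^ 2 / c ^ 2)) ^ 2 := by
    subst hu0 hu1; field_simp; ring
  have hpos : 0 ≤ (ρ * (σ + c ^ 2) / (c ^ 2 - v ^ 2)) * (c ^ 2 - σ * v ^ 2 / c ^ 2) := by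
    apply mul_nonneg (by positivity) (le_of_lt hσv)
  rw [key, Real.sqrt_sq hpos]
  have hu1ne : u1 ≠ 0 := by
    rw [hu1]
    apply div_ne_zero _ (ne_of_gt hD)
    exact mul_ne_zero (mul_ne_zero (ne_of_gt hρ) (ne_of_gt ha)) hvne
  constructor
  · rw [hu0, hu1]
    field_simp
    ring
  · rw [hu1]
    field_simp
end

section
/- Let E be a real Banach space, let α > 0, Δx > 0, set Δt̃ = Δx/(2α), let 0 < Δt < Δt̃, and set λ = Δt/Δt̃. Let u_C ∈ E and let u : ℝ → ℝ → E be such that u(Δt̃, ·) is integrable on [0, Δx/2], u(Δt, x) = u(Δt̃, x/λ) for x ∈ [0, α·Δt], and u(Δt, x) = u_C for x ∈ [α·Δt, Δx/2]. If moreover there exists w ∈ E such that (2/Δx)·∫₀^{Δx/2} u(Δt̃, x) dx = u_C − (2Δt̃/Δx)·w, then (2/Δx)·∫₀^{Δx/2} u(Δt, x) dx = u_C − (2Δt/Δx)·w. -/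
/-! Self-similarity makes `u Δt` on `[0, αΔt]` the copy of `u Δtmax` on `[0, Δx/2]` compressed
by `λ`, and `u Δt = u_C` on the rest of the half cell. Hence the half-cell average at `Δt` is
`λ · avg(u Δtmax) + (1 - λ) · u_C = u_C - λ (2Δtmax/Δx) w`, and `λ Δtmax = Δt`. -/

open MeasureTheory Set

section RescaledThenConstant

variable {E : Type*} [NormedAddCommGroup E] [NormedSpace ℝ E] [CompleteSpace E]
  {f g : ℝ → E} {c : E} {lam b : ℝ}

theorem integral_eq_smul_integral_add_smul_of_rescaled_then_const
    (hlam : 0 < lam) (hlam_le : lam ≤ 1) (hb : 0 ≤ b)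
    (hg : IntegrableOn g (Icc 0 b))
    (hfg : ∀ x ∈ Icc 0 (lam * b), f x = g (x / lam))
    (hfc : ∀ x ∈ Icc (lam * b) b, f x = c) :
    ∫ x in 0..b, f x = (lam • ∫ x in 0..b, g x) + (b - lam * b) • c := by
  have ha : 0 ≤ lam * b := by positivity
  have hab : lam * b ≤ b := mul_le_of_le_one_left hb hlam_le
  have hscale : lam * b / lam = b := by field_simp
  have hrescaled : ∫ x in 0..lam * b, f x = lam • ∫ x in 0..b, g x := by
    rw [intervalIntegral.integral_congr (g := fun x => g (x / lam)) (by
        intro x hx; exact hfg x (by rwa [uIcc_of_le ha] at hx)),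
      intervalIntegral.integral_comp_div _ hlam.ne', zero_div, hscale]
  have hconst : ∫ x in lam * b..b, f x = (b - lam * b) • c := by
    rw [intervalIntegral.integral_congr (g := fun _ => c) (by
        intro x hx; exact hfc x (by rwa [uIcc_of_le hab] at hx)),
      intervalIntegral.integral_const]
  have hg_rescaled : IntervalIntegrable (fun x => g (x / lam)) volume 0 (lam * b) := by
    have h := (hg.mono_set (uIcc_of_le hb).subset).intervalIntegrable.comp_mul_right (c := lam⁻¹)
    rw [zero_div, div_inv_eq_mul, mul_comm] at h
    simpa only [div_eq_mul_inv] using h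
  have hf₁ : IntervalIntegrable f volume 0 (lam * b) :=
    hg_rescaled.congr (fun x hx => (hfg x (Ioc_subset_Icc_self (by rwa [uIoc_of_le ha] at hx))).symm)
  have hf₂ : IntervalIntegrable f volume (lam * b) b :=
    (intervalIntegrable_const (c := c)).congr
      (fun x hx => (hfc x (Ioc_subset_Icc_self (by rwa [uIoc_of_le hab] at hx))).symm)
  rw [← intervalIntegral.integral_add_adjacent_intervals hf₁ hf₂, hrescaled, hconst]

end RescaledThenConstant

/-- The only effect of time dilation on the Godunov step is to shorten the input time:
if the half-cell average at the maximal CFL time `Δtmax = Δx/(2α)` equals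
`u_C − (2Δtmax/Δx)·w` (with `w` playing the role of the flux difference
`f(u_C) − f(u*ᴸ)`), then the half-cell average at the shortened time `Δt < Δtmax`
equals `u_C − (2Δt/Δx)·w`. -/
theorem godunov_step_time_dilation {E : Type*} [NormedAddCommGroup E]
    [NormedSpace ℝ E] [CompleteSpace E]
    (α Δx Δt Δtmax lam : ℝ) (hα : 0 < α) (hΔx : 0 < Δx)
    (hΔtmax : Δtmax = Δx / (2 * α)) (hΔt : 0 < Δt) (hlt : Δt < Δtmax)
    (hlam : lam = Δt / Δtmax)
    (uC : E) (u : ℝ → ℝ → E)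
    (hint : IntegrableOn (u Δtmax) (Set.Icc 0 (Δx / 2)))
    (h1 : ∀ x ∈ Set.Icc (0 : ℝ) (α * Δt), u Δt x = u Δtmax (x / lam))
    (h2 : ∀ x ∈ Set.Icc (α * Δt) (Δx / 2), u Δt x = uC)
    (w : E)
    (hw : (2 / Δx) • ∫ x in (0 : ℝ)..(Δx / 2), u Δtmax x = uC - (2 * Δtmax / Δx) • w) :
    (2 / Δx) • ∫ x in (0 : ℝ)..(Δx / 2), u Δt x = uC - (2 * Δt / Δx) • w := by
  have hΔtmax_pos : 0 < Δtmax := hΔt.trans hlt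
  have hlam_pos : 0 < lam := by rw [hlam]; positivity
  have hlam_le : lam ≤ 1 := by rw [hlam, div_le_one hΔtmax_pos]; exact hlt.le
  have hedge : α * Δt = lam * (Δx / 2) := by rw [hlam, hΔtmax]; field_simp
  rw [hedge] at h1 h2
  rw [integral_eq_smul_integral_add_smul_of_rescaled_then_const hlam_pos hlam_le
    (by positivity) hint h1 h2]
  have hΔt_eq : Δt = lam * Δtmax := by rw [hlam]; field_simp
  linear_combination (norm := skip) lam • hw
  rw [hΔt_eq]
  match_scalars <;> field_simp <;> ring
end
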